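/- Let w ∈ ℝⁿ. Define recursively ε₀ = w and, for i ≥ 1, βᵢ = sign(ε_{i−1}) and εᵢ = w − Pᵢ w, where Pᵢ is the orthogonal projection of ℝⁿ onto span{β₁, …, βᵢ}. If ε_{i−1} ≠ 0 for every 1 ≤ i ≤ I, then the vectors β₁, …, β_I are linearly independent; consequently the Gram matrix BᵀB of the matrix B = [β₁ ⋯ β_I] ∈ {−1,+1}^{n×I} is invertible. -/

import Mathlib

/-!
The residual `ε i = w - P w` is orthogonal to the span onto which `w` was projected, which contains
every earlier `β j`, while `⟪sign ε, ε⟫ = ‖ε‖₁ > 0`. So the pairing `(i, j) ↦ ⟪ε i, β j⟫` is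
triangular with nonzero diagonal, which forces linear independence of the `β j`; the Gram matrix
`BᵀB` of a linearly independent family is positive definite, hence invertible.
-/

open Matrix

/-- The coordinatewise sign vector: `signVec ε j = 1` if `ε j ≥ 0`, and `-1` otherwise. -/
noncomputable def signVec {n : ℕ} (ε : EuclideanSpace ℝ (Fin n)) : EuclideanSpace ℝ (Fin n) :=
  WithLp.toLp 2 (fun j => if 0 ≤ ε j then 1 else -1)

theorem linearIndependent_of_triangular_dual {R M ι : Type*} [CommRing R] [NoZeroDivisors R]
    [AddCommGroup M] [Module R M] [LinearOrder ι] {v : ι → M} (f : ι → Module.Dual R M)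
    (h_lt : ∀ ⦃i j⦄, j < i → f i (v j) = 0) (h_diag : ∀ i, f i (v i) ≠ 0) :
    LinearIndependent R v := by
  classical
  rw [linearIndependent_iff']
  intro s
  induction s using Finset.induction_on_max with
  | empty => simp
  | insert a s h_max ih =>
    intro g h_sum
    rw [Finset.sum_insert (fun ha => (h_max a ha).false)] at h_sum
    have h_a : g a = 0 := by
      have h_fa : f a (∑ i ∈ s, g i • v i) = 0 := by
        rw [map_sum]
        exact Finset.sum_eq_zero fun i hi => by rw [map_smul, h_lt (h_max i hi), smul_zero]
      simpa [h_fa, h_diag a] using congrArg (f a) h_sum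
    rw [h_a, zero_smul, zero_add] at h_sum
    exact (Finset.forall_mem_insert _ _ _).2 ⟨h_a, ih g h_sum⟩

theorem inner_signVec_self {n : ℕ} (ε : EuclideanSpace ℝ (Fin n)) :
    inner ℝ (signVec ε) ε = ∑ j, |ε j| := by
  simp only [PiLp.inner_apply, signVec]
  refine Finset.sum_congr rfl fun j _ => ?_
  split_ifs with h
  · simp [abs_of_nonneg h]
  · simp [abs_of_neg (not_le.1 h)]

theorem inner_signVec_self_pos {n : ℕ} {ε : EuclideanSpace ℝ (Fin n)} (hε : ε ≠ 0) :
    0 < inner ℝ (signVec ε) ε := by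
  obtain ⟨j, hj⟩ : ∃ j, ε j ≠ 0 := by
    by_contra! h
    exact hε (PiLp.ext h)
  rw [inner_signVec_self]
  exact Finset.sum_pos' (fun j _ => abs_nonneg _) ⟨j, Finset.mem_univ j, abs_pos.2 hj⟩

theorem gram_euclideanSpace_eq_transpose_mul {ι m : Type*} [Fintype ι]
    (v : m → EuclideanSpace ℝ ι) :
    gram ℝ v = (of fun j i => v i j)ᵀ * of fun j i => v i j := by
  simpa [conjTranspose_eq_transpose_of_trivial] using
    gram_eq_conjTranspose_mul (EuclideanSpace.basisFun ι ℝ) v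

theorem alq_sketching_linearIndependent_general {n I : ℕ} (w : EuclideanSpace ℝ (Fin n))
    (ε : ℕ → EuclideanSpace ℝ (Fin n)) (β : Fin I → EuclideanSpace ℝ (Fin n))
    (hβ : ∀ i : Fin I, β i = signVec (ε i.1))
    (hεrec : ∀ i : Fin I, ε (i.1 + 1) =
      w - (Submodule.orthogonalProjectionOnto (Submodule.span ℝ (β '' {j : Fin I | j ≤ i})) w :
        EuclideanSpace ℝ (Fin n)))
    (hne : ∀ i : Fin I, ε i.1 ≠ 0) :
    LinearIndependent ℝ β ∧
      IsUnit ((Matrix.of (fun (j : Fin n) (i : Fin I) => β i j))ᵀ *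
        (Matrix.of (fun (j : Fin n) (i : Fin I) => β i j))) := by
  have h_orth : ∀ ⦃i j : Fin I⦄, j < i → inner ℝ (ε i.1) (β j) = 0 := by
    intro i j hji
    obtain ⟨k, hjk, hki⟩ : ∃ k : Fin I, j ≤ k ∧ k.1 + 1 = i.1 :=
      ⟨⟨i.1 - 1, by omega⟩, Fin.le_def.2 (by simp only; omega), by simp only; omega⟩
    rw [← hki, hεrec k]
    exact Submodule.inner_left_of_mem_orthogonal
      (Submodule.subset_span (Set.mem_image_of_mem β hjk))
      (Submodule.sub_starProjection_mem_orthogonal w)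
  have h_li : LinearIndependent ℝ β :=
    linearIndependent_of_triangular_dual (fun i => innerₗ _ (ε i.1)) h_orth fun i => by
      simpa [hβ i, real_inner_comm] using (inner_signVec_self_pos (hne i)).ne'
  refine ⟨h_li, ?_⟩
  rw [← gram_euclideanSpace_eq_transpose_mul]
  exact (posDef_gram_of_linearIndependent h_li).isUnit

/-- ALQ structured sketching: starting from `ε 0 = w`, taking `β i = sign (ε i)` and
`ε (i+1) = w - P w` with `P` the orthogonal projection onto `span {β 0, …, β i}`
(0-based indexing of the paper's `β₁, …, β_I` and `ε₀, …, ε_{I-1}`), if all residuals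
`ε 0, …, ε (I-1)` are nonzero then `β 0, …, β (I-1)` are linearly independent and the
Gram matrix `BᵀB` of `B = [β₁ ⋯ β_I] ∈ {−1,+1}^{n×I}` is invertible. -/
theorem alq_sketching_linearIndependent {n I : ℕ} (w : EuclideanSpace ℝ (Fin n))
    (ε : ℕ → EuclideanSpace ℝ (Fin n)) (β : Fin I → EuclideanSpace ℝ (Fin n))
    (hε0 : ε 0 = w)
    (hβ : ∀ i : Fin I, β i = signVec (ε i.1))
    (hεrec : ∀ i : Fin I, ε (i.1 + 1) =
      w - (Submodule.orthogonalProjectionOnto (Submodule.span ℝ (β '' {j : Fin I | j ≤ i})) w :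
        EuclideanSpace ℝ (Fin n)))
    (hne : ∀ i : Fin I, ε i.1 ≠ 0) :
    LinearIndependent ℝ β ∧
      IsUnit ((Matrix.of (fun (j : Fin n) (i : Fin I) => β i j))ᵀ *
        (Matrix.of (fun (j : Fin n) (i : Fin I) => β i j))) :=
  alq_sketching_linearIndependent_general w ε β hβ hεrec hne
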